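/- arXiv:1111.5275 — 3 statements merged into one kernel-verified Lean document; each statement's English description precedes it below -/
import Mathlib

section
/- Either ρ_d(g) = A⁻¹ ∘ ρ(g) ∘ A for all g ∈ G, or ρ_d(g) = χ(g) · (A⁻¹ ∘ ρ(g) ∘ A) for all g ∈ G. In other words, ρ_d is isomorphic either to ρ or to the twist ρ ⊗ χ. -/
open scoped Classical

/-- Let `G` be a group, `N` a normal subgroup of index 2, `k` an
algebraically closed field, `V` a nonzero finite-dimensional `k`-vector space,
`ρ : G → GL(V)`, `ρd : G → GL(W)` representations and `A : W ≃ V` a linear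
isomorphism intertwining them on `N`, with the restriction of `ρ` to `N`
irreducible.  Let `χ` be the quadratic character of `G` cutting out `N`.
Then either `ρd(g) = A⁻¹ ∘ ρ(g) ∘ A` for all `g ∈ G`, or
`ρd(g) = χ(g) • (A⁻¹ ∘ ρ(g) ∘ A)` for all `g ∈ G`; i.e. `ρd` is isomorphic
either to `ρ` or to the twist `ρ ⊗ χ`. -/
theorem twist_dichotomy_of_irreducible_restriction
    {G : Type*} [Group G] (N : Subgroup G) [N.Normal] (hN : N.index = 2)
    {k : Type*} [Field k] [IsAlgClosed k]
    {V W : Type*} [AddCommGroup V] [Module k V] [FiniteDimensional k V] [Nontrivial V]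
    [AddCommGroup W] [Module k W]
    (ρ : G →* (V →ₗ[k] V)ˣ) (ρd : G →* (W →ₗ[k] W)ˣ) (A : W ≃ₗ[k] V)
    (hA : ∀ n ∈ N, (ρ n : V →ₗ[k] V) ∘ₗ (A : W →ₗ[k] V)
        = (A : W →ₗ[k] V) ∘ₗ (ρd n : W →ₗ[k] W))
    (hirr : ∀ U : Submodule k V,
        (∀ n ∈ N, ∀ x ∈ U, (ρ n : V →ₗ[k] V) x ∈ U) → U = ⊥ ∨ U = ⊤) :
    (∀ g : G, (ρd g : W →ₗ[k] W)
        = (A.symm : V →ₗ[k] W) ∘ₗ (ρ g : V →ₗ[k] V) ∘ₗ (A : W →ₗ[k] V))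
    ∨ (∀ g : G, (ρd g : W →ₗ[k] W)
        = (if g ∈ N then (1 : k) else (-1 : k)) •
            ((A.symm : V →ₗ[k] W) ∘ₗ (ρ g : V →ₗ[k] V) ∘ₗ (A : W →ₗ[k] V))) := by
  classical
  -- pointwise intertwining
  have hA1 : ∀ n ∈ N, ∀ w : W, (ρ n : V →ₗ[k] V) (A w) = A ((ρd n : W →ₗ[k] W) w) :=
    fun n hn w => LinearMap.congr_fun (hA n hn) w
  have hA2 : ∀ n ∈ N, ∀ y : V, (ρd n : W →ₗ[k] W) (A.symm y) = A.symm ((ρ n : V →ₗ[k] V) y) := by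
    intro n hn y
    apply A.injective
    rw [← hA1 n hn, A.apply_symm_apply, A.apply_symm_apply]
  -- multiplicativity pointwise
  have hρmul : ∀ a b : G, ∀ x : V, (ρ (a * b) : V →ₗ[k] V) x
      = (ρ a : V →ₗ[k] V) ((ρ b : V →ₗ[k] V) x) := by
    intro a b x
    rw [map_mul]
    rfl
  have hρdmul : ∀ a b : G, ∀ w : W, (ρd (a * b) : W →ₗ[k] W) w
      = (ρd a : W →ₗ[k] W) ((ρd b : W →ₗ[k] W) w) := by
    intro a b x
    rw [map_mul]
    rfl
  -- Schur
  have schur : ∀ T : V →ₗ[k] V,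
      (∀ n ∈ N, ∀ x : V, (ρ n : V →ₗ[k] V) (T x) = T ((ρ n : V →ₗ[k] V) x)) →
      ∃ c : k, ∀ x, T x = c • x := by
    intro T hT
    obtain ⟨μ, hμ⟩ := Module.End.exists_eigenvalue (T : Module.End k V)
    refine ⟨μ, fun x => ?_⟩
    have hU : Module.End.eigenspace (T : Module.End k V) μ ≠ ⊥ := hμ
    have hinv : ∀ n ∈ N, ∀ y ∈ Module.End.eigenspace (T : Module.End k V) μ,
        (ρ n : V →ₗ[k] V) y ∈ Module.End.eigenspace (T : Module.End k V) μ := by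
      intro n hn y hy
      rw [Module.End.mem_eigenspace_iff] at hy ⊢
      rw [← hT n hn, hy, map_smul]
    rcases hirr _ hinv with h | h
    · exact absurd h hU
    · have hx : x ∈ Module.End.eigenspace (T : Module.End k V) μ := h ▸ Submodule.mem_top
      exact Module.End.mem_eigenspace_iff.mp hx
  -- key scalar
  have key : ∀ g : G, ∃ c : k, ∀ w : W,
      (ρd g : W →ₗ[k] W) w = c • A.symm ((ρ g : V →ₗ[k] V) (A w)) := by
    intro g
    set T : V →ₗ[k] V :=
      (A : W →ₗ[k] V) ∘ₗ (ρd g : W →ₗ[k] W) ∘ₗ (A.symm : V →ₗ[k] W) ∘ₗ (ρ g⁻¹ : V →ₗ[k] V)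
      with hT
    have hTapp : ∀ x : V, T x = A ((ρd g : W →ₗ[k] W) (A.symm ((ρ g⁻¹ : V →ₗ[k] V) x))) :=
      fun x => rfl
    have hcomm : ∀ n ∈ N, ∀ x : V, (ρ n : V →ₗ[k] V) (T x) = T ((ρ n : V →ₗ[k] V) x) := by
      intro n hn x
      have hm : g⁻¹ * n * g ∈ N := by
        have := Subgroup.Normal.conj_mem ‹N.Normal› n hn g⁻¹
        simpa using this
      calc (ρ n : V →ₗ[k] V) (T x)
          = (ρ n : V →ₗ[k] V) (A ((ρd g : W →ₗ[k] W) (A.symm ((ρ g⁻¹ : V →ₗ[k] V) x)))) := by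
            rw [hTapp]
        _ = A ((ρd n : W →ₗ[k] W) ((ρd g : W →ₗ[k] W) (A.symm ((ρ g⁻¹ : V →ₗ[k] V) x)))) := by
            rw [hA1 n hn]
        _ = A ((ρd (n * g) : W →ₗ[k] W) (A.symm ((ρ g⁻¹ : V →ₗ[k] V) x))) := by
            rw [hρdmul]
        _ = A ((ρd (g * (g⁻¹ * n * g)) : W →ₗ[k] W) (A.symm ((ρ g⁻¹ : V →ₗ[k] V) x))) := by
            group
        _ = A ((ρd g : W →ₗ[k] W) ((ρd (g⁻¹ * n * g) : W →ₗ[k] W)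
              (A.symm ((ρ g⁻¹ : V →ₗ[k] V) x)))) := by rw [hρdmul]
        _ = A ((ρd g : W →ₗ[k] W) (A.symm ((ρ (g⁻¹ * n * g) : V →ₗ[k] V)
              ((ρ g⁻¹ : V →ₗ[k] V) x)))) := by rw [hA2 _ hm]
        _ = A ((ρd g : W →ₗ[k] W) (A.symm ((ρ (g⁻¹ * n) : V →ₗ[k] V) x))) := by
            rw [← hρmul]; group
        _ = A ((ρd g : W →ₗ[k] W) (A.symm ((ρ g⁻¹ : V →ₗ[k] V) ((ρ n : V →ₗ[k] V) x)))) := by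
            rw [← hρmul]
        _ = T ((ρ n : V →ₗ[k] V) x) := (hTapp _).symm
    obtain ⟨c, hc⟩ := schur T hcomm
    refine ⟨c, fun w => ?_⟩
    have := hc ((ρ g : V →ₗ[k] V) (A w))
    rw [hTapp] at this
    have h1 : (ρ g⁻¹ : V →ₗ[k] V) ((ρ g : V →ₗ[k] V) (A w)) = A w := by
      rw [← hρmul]; simp
    rw [h1, A.symm_apply_apply] at this
    apply A.injective
    rw [this, map_smul, A.apply_symm_apply]
  choose c hc using key
  -- uniqueness of scalar
  obtain ⟨v, hv⟩ : ∃ v : V, v ≠ 0 := exists_ne 0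
  have uniq : ∀ (g : G) (c' : k),
      (∀ w : W, (ρd g : W →ₗ[k] W) w = c' • A.symm ((ρ g : V →ₗ[k] V) (A w))) → c g = c' := by
    intro g c' hc'
    set w : W := A.symm ((ρ g⁻¹ : V →ₗ[k] V) v) with hw
    have hgw : (ρ g : V →ₗ[k] V) (A w) = v := by
      rw [hw, A.apply_symm_apply, ← hρmul]; simp
    have h1 := hc g w
    have h2 := hc' w
    rw [hgw] at h1 h2
    have : c g • A.symm v = c' • A.symm v := h1 ▸ h2 ▸ rfl
    have hne : A.symm v ≠ 0 := fun h => hv (by simpa using congrArg A h)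
    exact smul_left_injective k hne this
  have hcN : ∀ n ∈ N, c n = 1 := by
    intro n hn
    refine uniq n 1 fun w => ?_
    rw [one_smul, hA1 n hn, A.symm_apply_apply]
  have hcmul : ∀ g h : G, c (g * h) = c g * c h := by
    intro g h
    refine uniq (g * h) _ fun w => ?_
    rw [hρdmul, hc h w, map_smul, hc g, A.apply_symm_apply, smul_smul,
      mul_comm (c h) (c g), hρmul g h]
  have hcsq : ∀ g : G, c g = 1 ∨ c g = -1 := by
    intro g
    have : c g * c g = 1 := by
      rw [← hcmul, hcN _ (Subgroup.mul_self_mem_of_index_two hN g)]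
    exact mul_self_eq_one_iff.mp this
  by_cases hall : ∀ g : G, c g = 1
  · left
    intro g
    ext w
    simp only [LinearMap.comp_apply]
    rw [hc g w, hall g, one_smul]
    rfl
  · right
    push_neg at hall
    obtain ⟨g₀, hg₀⟩ := hall
    have hcg₀ : c g₀ = -1 := (hcsq g₀).resolve_left hg₀
    have hg₀N : g₀ ∉ N := fun h => hg₀ (hcN g₀ h)
    have hcval : ∀ g : G, c g = if g ∈ N then (1 : k) else -1 := by
      intro g
      by_cases hg : g ∈ N
      · rw [if_pos hg, hcN g hg]
      · rw [if_neg hg]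
        have hmem : g * g₀⁻¹ ∈ N := by
          rw [Subgroup.mul_mem_iff_of_index_two hN]
          simp [hg, hg₀N]
        have : c g = c (g * g₀⁻¹) * c g₀ := by rw [← hcmul]; group
        rw [this, hcN _ hmem, hcg₀, one_mul]
    intro g
    ext w
    simp only [LinearMap.smul_apply, LinearMap.comp_apply]
    rw [hc g w, hcval g]
    rfl
end

section
/- If there exists σ ∈ G \ N such that ρ(σ) ∘ A ∘ ρ_d(σ)⁻¹ ∘ A⁻¹ is not the identity map of V, then ρ_d(g) = χ(g) · (A⁻¹ ∘ ρ(g) ∘ A) for all g ∈ G; that is, ρ_d is isomorphic to the twist ρ ⊗ χ. -/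
open scoped Classical

/-- In the setting of Statement 7 (`N ≤ G` normal of index 2, `k`
algebraically closed, `V` nonzero finite-dimensional, `A : W ≃ V` intertwining
`ρ` and `ρd` on `N`, restriction of `ρ` to `N` irreducible, `χ` the quadratic
character cutting out `N`): if there exists `σ ∈ G \ N` such that
`ρ(σ) ∘ A ∘ ρd(σ)⁻¹ ∘ A⁻¹` is not the identity map of `V`, then
`ρd(g) = χ(g) • (A⁻¹ ∘ ρ(g) ∘ A)` for all `g ∈ G`; i.e. `ρd ≅ ρ ⊗ χ`. -/
theorem twist_of_nontrivial_involution
    {G : Type*} [Group G] (N : Subgroup G) [N.Normal] (hN : N.index = 2)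
    {k : Type*} [Field k] [IsAlgClosed k]
    {V W : Type*} [AddCommGroup V] [Module k V] [FiniteDimensional k V] [Nontrivial V]
    [AddCommGroup W] [Module k W]
    (ρ : G →* (V →ₗ[k] V)ˣ) (ρd : G →* (W →ₗ[k] W)ˣ) (A : W ≃ₗ[k] V)
    (hA : ∀ n ∈ N, (ρ n : V →ₗ[k] V) ∘ₗ (A : W →ₗ[k] V)
        = (A : W →ₗ[k] V) ∘ₗ (ρd n : W →ₗ[k] W))
    (hirr : ∀ U : Submodule k V,
        (∀ n ∈ N, ∀ x ∈ U, (ρ n : V →ₗ[k] V) x ∈ U) → U = ⊥ ∨ U = ⊤)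
    (hσ : ∃ σ : G, σ ∉ N ∧
        (ρ σ : V →ₗ[k] V) ∘ₗ (A : W →ₗ[k] V)
            ∘ₗ (((ρd σ)⁻¹ : (W →ₗ[k] W)ˣ) : W →ₗ[k] W) ∘ₗ (A.symm : V →ₗ[k] W)
          ≠ LinearMap.id) :
    ∀ g : G, (ρd g : W →ₗ[k] W)
        = (if g ∈ N then (1 : k) else (-1 : k)) •
            ((A.symm : V →ₗ[k] W) ∘ₗ (ρ g : V →ₗ[k] V) ∘ₗ (A : W →ₗ[k] V)) := by
  classical
  obtain ⟨σ, hσN, hσT⟩ := hσ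
  -- pointwise versions of the intertwining hypothesis
  have hA' : ∀ n ∈ N, ∀ w : W,
      (ρ n : V →ₗ[k] V) (A w) = A ((ρd n : W →ₗ[k] W) w) := by
    intro n hn w
    exact LinearMap.congr_fun (hA n hn) w
  -- inverse-cancellation for units of endomorphisms
  have hinv₁ : ∀ g : G, ∀ w : W,
      (((ρd g)⁻¹ : (W →ₗ[k] W)ˣ) : W →ₗ[k] W) ((ρd g : W →ₗ[k] W) w) = w := by
    intro g w
    have h : (((ρd g)⁻¹ : (W →ₗ[k] W)ˣ) : W →ₗ[k] W) * (ρd g : W →ₗ[k] W) = 1 := by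
      rw [← Units.val_mul, inv_mul_cancel, Units.val_one]
    have := LinearMap.congr_fun h w
    rwa [Module.End.mul_apply, Module.End.one_apply] at this
  have hinv₂ : ∀ g : G, ∀ w : W,
      (ρd g : W →ₗ[k] W) ((((ρd g)⁻¹ : (W →ₗ[k] W)ˣ) : W →ₗ[k] W) w) = w := by
    intro g w
    have h : (ρd g : W →ₗ[k] W) * (((ρd g)⁻¹ : (W →ₗ[k] W)ˣ) : W →ₗ[k] W) = 1 := by
      rw [← Units.val_mul, mul_inv_cancel, Units.val_one]
    have := LinearMap.congr_fun h w
    rwa [Module.End.mul_apply, Module.End.one_apply] at this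
  -- the "twisting" operators
  set T : G → (V →ₗ[k] V) := fun g =>
    (ρ g : V →ₗ[k] V) ∘ₗ (A : W →ₗ[k] V)
      ∘ₗ (((ρd g)⁻¹ : (W →ₗ[k] W)ˣ) : W →ₗ[k] W) ∘ₗ (A.symm : V →ₗ[k] W) with hT
  have hTapp : ∀ g : G, ∀ v : V,
      T g v = (ρ g : V →ₗ[k] V) (A ((((ρd g)⁻¹ : (W →ₗ[k] W)ˣ) : W →ₗ[k] W) (A.symm v))) := by
    intro g v; simp [hT]
  -- Schur's lemma
  have schur : ∀ S : V →ₗ[k] V,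
      (∀ n ∈ N, ∀ v : V, (ρ n : V →ₗ[k] V) (S v) = S ((ρ n : V →ₗ[k] V) v)) →
      ∃ c : k, ∀ v : V, S v = c • v := by
    intro S hS
    obtain ⟨c, hc⟩ := Module.End.exists_eigenvalue (S : Module.End k V)
    refine ⟨c, ?_⟩
    have hU : ∀ n ∈ N, ∀ x ∈ Module.End.eigenspace (S : Module.End k V) c,
        (ρ n : V →ₗ[k] V) x ∈ Module.End.eigenspace (S : Module.End k V) c := by
      intro n hn x hx
      rw [Module.End.mem_eigenspace_iff] at hx ⊢
      calc S ((ρ n : V →ₗ[k] V) x) = (ρ n : V →ₗ[k] V) (S x) := (hS n hn x).symm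
        _ = (ρ n : V →ₗ[k] V) (c • x) := by rw [hx]
        _ = c • (ρ n : V →ₗ[k] V) x := map_smul _ _ _
    rcases hirr _ hU with h | h
    · exact absurd h hc
    · intro v
      have hv : v ∈ Module.End.eigenspace (S : Module.End k V) c := h ▸ Submodule.mem_top
      exact Module.End.mem_eigenspace_iff.mp hv
  -- T g commutes with ρ(n) for n ∈ N
  have hcomm : ∀ g : G, ∀ n ∈ N, ∀ v : V,
      (ρ n : V →ₗ[k] V) (T g v) = T g ((ρ n : V →ₗ[k] V) v) := by
    intro g n hn v
    have hn' : g⁻¹ * n * g ∈ N := Subgroup.Normal.conj_mem' ‹N.Normal› n hn g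
    -- A.symm (ρ n v) = ρd n (A.symm v)
    have h1 : A.symm ((ρ n : V →ₗ[k] V) v) = (ρd n : W →ₗ[k] W) (A.symm v) := by
      have := hA' n hn (A.symm v)
      rw [A.apply_symm_apply] at this
      rw [this, A.symm_apply_apply]
    -- (ρd g)⁻¹ * ρd n = ρd (g⁻¹ n g) * (ρd g)⁻¹ as units
    have h2 : ((ρd g)⁻¹ : (W →ₗ[k] W)ˣ) * ρd n = ρd (g⁻¹ * n * g) * ((ρd g)⁻¹ : (W →ₗ[k] W)ˣ) := by
      rw [← map_inv, ← map_mul, ← map_mul]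
      congr 1
      group
    have h2' : ∀ w : W,
        (((ρd g)⁻¹ : (W →ₗ[k] W)ˣ) : W →ₗ[k] W) ((ρd n : W →ₗ[k] W) w)
          = (ρd (g⁻¹ * n * g) : W →ₗ[k] W) ((((ρd g)⁻¹ : (W →ₗ[k] W)ˣ) : W →ₗ[k] W) w) := by
      intro w
      have h2v := congrArg Units.val h2
      have := LinearMap.congr_fun h2v w
      rwa [Units.val_mul, Units.val_mul, Module.End.mul_apply, Module.End.mul_apply] at this
    have h3 : ∀ w : W, A ((ρd (g⁻¹ * n * g) : W →ₗ[k] W) w)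
        = (ρ (g⁻¹ * n * g) : V →ₗ[k] V) (A w) := fun w => (hA' _ hn' w).symm
    have h4 : (ρ g : V →ₗ[k] V) ∘ (ρ (g⁻¹ * n * g) : V →ₗ[k] V)
        = (ρ n : V →ₗ[k] V) ∘ (ρ g : V →ₗ[k] V) := by
      have : ρ g * ρ (g⁻¹ * n * g) = ρ n * ρ g := by
        rw [← map_mul, ← map_mul]; congr 1; group
      have hv := congrArg Units.val this
      funext w
      have := LinearMap.congr_fun hv w
      rwa [Units.val_mul, Units.val_mul, Module.End.mul_apply, Module.End.mul_apply] at this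
    rw [hTapp, hTapp, h1, h2', h3]
    exact (congrFun h4 (A ((((ρd g)⁻¹ : (W →ₗ[k] W)ˣ) : W →ₗ[k] W) (A.symm v)))).symm
  -- scalars
  have hscalar : ∀ g : G, ∃ c : k, ∀ v : V, T g v = c • v := by
    intro g
    exact schur (T g) (hcomm g)
  choose c hc using hscalar
  obtain ⟨v0, hv0⟩ := exists_ne (0 : V)
  have hcinj : ∀ {a b : k}, a • v0 = b • v0 → a = b := by
    intro a b hab
    by_contra hne
    have : (a - b) • v0 = 0 := by rw [sub_smul, hab, sub_self]
    rcases smul_eq_zero.mp this with h | h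
    · exact hne (sub_eq_zero.mp h)
    · exact hv0 h
  -- c is trivial on N
  have hcN : ∀ n ∈ N, c n = 1 := by
    intro n hn
    have hTn : T n v0 = v0 := by
      rw [hTapp]
      rw [hA' n hn, hinv₂, A.apply_symm_apply]
    have := hc n v0
    rw [hTn] at this
    exact (hcinj (by simpa using this)).symm
  -- multiplicativity
  have hcmul : ∀ g h : G, c (g * h) = c g * c h := by
    intro g h
    have key : T (g * h) v0 = c h • T g v0 := by
      rw [hTapp, hTapp]
      have e1 : (ρ (g * h) : V →ₗ[k] V)
          = (ρ g : V →ₗ[k] V) * (ρ h : V →ₗ[k] V) := by rw [← Units.val_mul, ← map_mul]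
      have e2 : ((((ρd (g * h))⁻¹ : (W →ₗ[k] W)ˣ)) : W →ₗ[k] W)
          = (((ρd h)⁻¹ : (W →ₗ[k] W)ˣ) : W →ₗ[k] W) * (((ρd g)⁻¹ : (W →ₗ[k] W)ˣ) : W →ₗ[k] W) := by
        rw [← Units.val_mul, ← mul_inv_rev, ← map_mul]
      rw [e1, e2]
      simp only [Module.End.mul_apply]
      set w := (((ρd g)⁻¹ : (W →ₗ[k] W)ˣ) : W →ₗ[k] W) (A.symm v0) with hw
      have hTh : T h (A w) = c h • A w := hc h (A w)
      rw [hTapp] at hTh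
      rw [A.symm_apply_apply] at hTh
      rw [hTh, map_smul]
    have h1 := hc (g * h) v0
    have h2 := hc g v0
    rw [key, h2, smul_smul] at h1
    rw [mul_comm (c h) (c g)] at h1
    exact (hcinj h1).symm
  -- c σ = -1
  have hcσ : c σ = -1 := by
    have hne : c σ ≠ 1 := by
      intro h1
      apply hσT
      apply LinearMap.ext
      intro v
      have := hc σ v
      rw [h1, one_smul] at this
      simpa [hT] using this
    have hsq : c σ * c σ = 1 := by
      rw [← hcmul]
      exact hcN _ (Subgroup.mul_self_mem_of_index_two hN σ)
    rcases mul_self_eq_one_iff.mp hsq with h | h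
    · exact absurd h hne
    · exact h
  -- c g = -1 for g ∉ N
  have hcg : ∀ g : G, g ∉ N → c g = -1 := by
    intro g hg
    have hmem : g * σ⁻¹ ∈ N := by
      rw [Subgroup.mul_mem_iff_of_index_two hN]
      simp [hg, hσN]
    have : c g = c (g * σ⁻¹) * c σ := by
      rw [← hcmul]
      congr 1
      group
    rw [this, hcN _ hmem, one_mul, hcσ]
  -- conclude
  intro g
  set ε : k := if g ∈ N then (1 : k) else (-1 : k) with hε
  have hcgε : c g = ε := by
    by_cases hg : g ∈ N
    · simp [hε, hg, hcN g hg]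
    · simp [hε, hg, hcg g hg]
  have hε2 : ε * ε = 1 := by
    by_cases hg : g ∈ N <;> simp [hε, hg]
  apply LinearMap.ext
  intro w
  have key := hc g (A ((ρd g : W →ₗ[k] W) w))
  rw [hTapp, A.symm_apply_apply, hinv₁, hcgε] at key
  -- key : ρ g (A w) = ε • A (ρd g w)
  have key2 : A.symm ((ρ g : V →ₗ[k] V) (A w)) = ε • (ρd g : W →ₗ[k] W) w := by
    rw [key, map_smul, A.symm_apply_apply]
  have key3 : ε • A.symm ((ρ g : V →ₗ[k] V) (A w)) = (ρd g : W →ₗ[k] W) w := by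
    rw [key2, smul_smul, hε2, one_smul]
  rw [← key3]
  simp [LinearMap.comp_apply]
end

section
/- For all u, v, x₂, x₃, x₄ ∈ K one has f_d(u, v, x₂, x₃, x₄) = 16 · f((u + cv)/2, (u − cv)/2, x₂, x₃, x₄). Consequently, the map θ_c(u, v, x₂, x₃, x₄) := ((u + cv)/2, (u − cv)/2, x₂, x₃, x₄) is a bijection from the zero set {f_d = 0} ⊆ K⁵ onto the zero set {f = 0} ⊆ K⁵. -/
/-- Let `K` be a field of characteristic ≠ 2, `c ∈ K` nonzero and
`d := c²`.  With the Schoen quintic polynomial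
`f(x₀,x₁,x₂,x₃,x₄) = x₀⁵+x₁⁵+x₂⁵+x₃⁵+x₄⁵ − 5x₀x₁x₂x₃x₄` and its twist
`f_d(u,v,x₂,x₃,x₄) = u⁵+10d·u³v²+5d²·uv⁴+16(x₂⁵+x₃⁵+x₄⁵)−20(u²−d·v²)x₂x₃x₄`,
one has `f_d(u,v,x₂,x₃,x₄) = 16·f((u+cv)/2,(u−cv)/2,x₂,x₃,x₄)` for all
`u,v,x₂,x₃,x₄ ∈ K`; consequently the map
`θ_c(u,v,x₂,x₃,x₄) := ((u+cv)/2,(u−cv)/2,x₂,x₃,x₄)` is a bijection from the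
zero set of `f_d` in `K⁵` onto the zero set of `f` in `K⁵`. -/
theorem schoen_quintic_twist_identity_and_bijection
    {K : Type*} [Field K] (h2 : (2 : K) ≠ 0) (c : K) (hc : c ≠ 0)
    (d : K) (hd : d = c ^ 2) :
    (∀ u v x2 x3 x4 : K,
      u ^ 5 + 10 * d * u ^ 3 * v ^ 2 + 5 * d ^ 2 * u * v ^ 4
          + 16 * (x2 ^ 5 + x3 ^ 5 + x4 ^ 5)
          - 20 * (u ^ 2 - d * v ^ 2) * (x2 * x3 * x4)
        = 16 * (((u + c * v) / 2) ^ 5 + ((u - c * v) / 2) ^ 5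
            + x2 ^ 5 + x3 ^ 5 + x4 ^ 5
            - 5 * ((u + c * v) / 2) * ((u - c * v) / 2) * x2 * x3 * x4))
    ∧ Set.BijOn
        (fun p : K × K × K × K × K =>
          (((p.1 + c * p.2.1) / 2, (p.1 - c * p.2.1) / 2, p.2.2) : K × K × K × K × K))
        {p : K × K × K × K × K |
          p.1 ^ 5 + 10 * d * p.1 ^ 3 * p.2.1 ^ 2 + 5 * d ^ 2 * p.1 * p.2.1 ^ 4
            + 16 * (p.2.2.1 ^ 5 + p.2.2.2.1 ^ 5 + p.2.2.2.2 ^ 5)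
            - 20 * (p.1 ^ 2 - d * p.2.1 ^ 2) * (p.2.2.1 * p.2.2.2.1 * p.2.2.2.2) = 0}
        {p : K × K × K × K × K |
          p.1 ^ 5 + p.2.1 ^ 5 + p.2.2.1 ^ 5 + p.2.2.2.1 ^ 5 + p.2.2.2.2 ^ 5
            - 5 * (p.1 * p.2.1 * p.2.2.1 * p.2.2.2.1 * p.2.2.2.2) = 0} := by

  have key : ∀ u v x2 x3 x4 : K,
      u ^ 5 + 10 * d * u ^ 3 * v ^ 2 + 5 * d ^ 2 * u * v ^ 4
          + 16 * (x2 ^ 5 + x3 ^ 5 + x4 ^ 5)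
          - 20 * (u ^ 2 - d * v ^ 2) * (x2 * x3 * x4)
        = 16 * (((u + c * v) / 2) ^ 5 + ((u - c * v) / 2) ^ 5
            + x2 ^ 5 + x3 ^ 5 + x4 ^ 5
            - 5 * ((u + c * v) / 2) * ((u - c * v) / 2) * x2 * x3 * x4) := by
    intro u v x2 x3 x4
    subst hd
    field_simp
    ring
  refine ⟨key, ?_, ?_, ?_⟩
  · rintro ⟨u, v, x2, x3, x4⟩ hp
    simp only [Set.mem_setOf_eq] at hp ⊢
    have h := key u v x2 x3 x4
    rw [hp] at h
    have h16 : (16 : K) ≠ 0 := by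
      have : (16 : K) = 2 ^ 4 := by norm_num
      rw [this]; exact pow_ne_zero _ h2
    have hA := (mul_eq_zero.mp h.symm).resolve_left h16
    linear_combination hA
  · rintro ⟨u, v, x2, x3, x4⟩ - ⟨u', v', x2', x3', x4'⟩ - h
    simp only [Prod.mk.injEq] at h
    obtain ⟨h1, h2', h3⟩ := h
    have e1 : u + c * v = u' + c * v' := by
      field_simp at h1; linear_combination h1
    have e2 : u - c * v = u' - c * v' := by
      field_simp at h2'; linear_combination h2'
    have hu : u = u' := by
      have h : 2 * u = 2 * u' := by linear_combination e1 + e2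
      exact mul_left_cancel₀ h2 h
    have hv : v = v' := by
      have h : 2 * (c * v) = 2 * (c * v') := by linear_combination e1 - e2
      exact mul_left_cancel₀ hc (mul_left_cancel₀ h2 h)
    simp [hu, hv, h3]
  · rintro ⟨x0, x1, x2, x3, x4⟩ hq
    simp only [Set.mem_setOf_eq] at hq
    refine ⟨(x0 + x1, (x0 - x1) / c, x2, x3, x4), ?_, ?_⟩
    · simp only [Set.mem_setOf_eq]
      have h16 : (16 : K) ≠ 0 := by
        have : (16 : K) = 2 ^ 4 := by norm_num
        rw [this]; exact pow_ne_zero _ h2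
      have := key (x0 + x1) ((x0 - x1) / c) x2 x3 x4
      rw [this]
      have e0 : ((x0 + x1) + c * ((x0 - x1) / c)) / 2 = x0 := by
        field_simp; ring
      have e1 : ((x0 + x1) - c * ((x0 - x1) / c)) / 2 = x1 := by
        field_simp; ring
      rw [e0, e1, show x0 ^ 5 + x1 ^ 5 + x2 ^ 5 + x3 ^ 5 + x4 ^ 5 - 5 * x0 * x1 * x2 * x3 * x4 = x0 ^ 5 + x1 ^ 5 + x2 ^ 5 + x3 ^ 5 + x4 ^ 5 - 5 * (x0 * x1 * x2 * x3 * x4) by ring, hq, mul_zero]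
    · have e0 : ((x0 + x1) + c * ((x0 - x1) / c)) / 2 = x0 := by
        field_simp; ring
      have e1 : ((x0 + x1) - c * ((x0 - x1) / c)) / 2 = x1 := by
        field_simp; ring
      simp [e0, e1]
end
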